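/- Let F_n^1 be the filiform Leibniz algebra ([e_1,e_1]=e_3, [e_i,e_1]=e_{i+1} for 2 ≤ i ≤ n−1). If (d,D) is a biderivation of F_n^1, then writing D(e_1) = Σ β_j e_j and D(e_2) = β_{n+1}e_1 − β_{n+1}e_2 + β_{n+2}e_n, one necessarily has β_1 equal to the coefficient α_1 of e_1 in d(e_1), and β_{n+1} = 0. -/

import Mathlib

/-!
Right multiplication by a vector `y` of `F_n^1` only sees its `e_1`-coefficient, and
`[e_1, z]` has `e_3`-coefficient `z_1`. Hence `[x, d y] = [x, D y]` forces `d` and `D` to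
agree on `e_1`-coefficients, which gives `β₁ = α₁`; and applying the derivation `d` to
`[e_1, e_2] = 0` shows that `d e_2` has no `e_1`-component, so neither has `D e_2`.
Basis vectors are indexed from `0`: `e_i` is `Pi.single ⟨i - 1, _⟩ 1`.
-/

def F1br (n : ℕ) (x y : Fin n → ℂ) : Fin n → ℂ := fun i =>
  if h2 : (i : ℕ) = 2 then
    y ⟨0, by have := i.isLt; omega⟩ *
      (x ⟨0, by have := i.isLt; omega⟩ + x ⟨1, by have := i.isLt; omega⟩)
  else if h3 : 3 ≤ (i : ℕ) then
    y ⟨0, by have := i.isLt; omega⟩ * x ⟨(i : ℕ) - 1, by have := i.isLt; omega⟩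
  else 0

namespace F1br

variable {n : ℕ}

theorem eq_zero_of_apply_zero (hn : 0 < n) (x : Fin n → ℂ) {y : Fin n → ℂ}
    (hy : y ⟨0, hn⟩ = 0) : F1br n x y = 0 := by
  funext i
  unfold F1br
  split_ifs <;> simp [hy]

theorem single_zero_apply_two (hn : 2 < n) (z : Fin n → ℂ) :
    F1br n (Pi.single ⟨0, by omega⟩ 1) z ⟨2, by omega⟩ = z ⟨0, by omega⟩ := by
  simp [F1br, Fin.ext_iff]

theorem apply_zero_eq_of_single_zero_eq (hn : 2 < n) {u v : Fin n → ℂ}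
    (h : F1br n (Pi.single ⟨0, by omega⟩ 1) u = F1br n (Pi.single ⟨0, by omega⟩ 1) v) :
    u ⟨0, by omega⟩ = v ⟨0, by omega⟩ := by
  rw [← single_zero_apply_two hn u, h, single_zero_apply_two hn v]

theorem derivation_single_one_apply_zero (hn : 2 < n) (d : (Fin n → ℂ) →ₗ[ℂ] (Fin n → ℂ))
    (hd : ∀ x y, d (F1br n x y) = F1br n (d x) y + F1br n x (d y)) :
    d (Pi.single ⟨1, by omega⟩ 1) ⟨0, by omega⟩ = 0 := by
  have he2 : (Pi.single ⟨1, by omega⟩ 1 : Fin n → ℂ) ⟨0, by omega⟩ = 0 :=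
    Pi.single_eq_of_ne (by simp [Fin.ext_iff]) _
  have hbr := hd (Pi.single ⟨0, by omega⟩ 1) (Pi.single ⟨1, by omega⟩ 1)
  rw [eq_zero_of_apply_zero _ _ he2, eq_zero_of_apply_zero _ _ he2, map_zero, zero_add] at hbr
  simpa [single_zero_apply_two hn] using (congrFun hbr ⟨2, hn⟩).symm

end F1br

/-- for a biderivation `(d,D)` of `F_n^1`, the `e_1`-coefficient
`β₁` of `D(e_1)` equals the `e_1`-coefficient `α₁` of `d(e_1)`, and the
parameter `β_{n+1}` (the `e_1`-coefficient of `D(e_2)`) vanishes. -/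
theorem F1_biderivation_constraints (n : ℕ) (hn : 3 ≤ n)
    (d D : (Fin n → ℂ) →ₗ[ℂ] (Fin n → ℂ))
    (hd : ∀ x y, d (F1br n x y) = F1br n (d x) y + F1br n x (d y))
    (hc : ∀ x y, F1br n x (d y) = F1br n x (D y)) :
    D (Pi.single ⟨0, by omega⟩ 1) ⟨0, by omega⟩ =
      d (Pi.single ⟨0, by omega⟩ 1) ⟨0, by omega⟩ ∧
    D (Pi.single ⟨1, by omega⟩ 1) ⟨0, by omega⟩ = 0 := by
  have hcoeff : ∀ y, d y ⟨0, by omega⟩ = D y ⟨0, by omega⟩ :=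
    fun y ↦ F1br.apply_zero_eq_of_single_zero_eq (by omega) (hc _ y)
  exact ⟨(hcoeff _).symm,
    (hcoeff _).symm.trans (F1br.derivation_single_one_apply_zero (by omega) d hd)⟩
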